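/- For all γ > 0, t > 0 and x ≥ 0, the transition kernel of sticky Brownian motion on [0,∞) has total mass one: ∫_0^∞ [ p^D(t,x,y) + 2 g_{0,γ}(t, x+y) ] dy + γ g_{0,γ}(t,x) = 1. (Conservativeness of sticky Brownian motion.) -/

import Mathlib

open Real Set MeasureTheory

/-- The complementary error function `erfc(u) = (2/√π) ∫_u^∞ e^{-z²} dz`. -/
noncomputable def erfc (u : ℝ) : ℝ :=
  (2 / Real.sqrt Real.pi) * ∫ z in Set.Ioi u, Real.exp (-z ^ 2)

/-- `g_{0,γ}(t,x) = (1/γ) exp(2x/γ + 2t/γ²) erfc(x/√(2t) + √(2t)/γ)`. -/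
noncomputable def g0 (γ t x : ℝ) : ℝ :=
  (1 / γ) * Real.exp (2 * x / γ + 2 * t / γ ^ 2) *
    erfc (x / Real.sqrt (2 * t) + Real.sqrt (2 * t) / γ)

/-- The Gaussian heat kernel `p(t,x,y) = (2πt)^{-1/2} e^{-(x-y)²/(2t)}`. -/
noncomputable def heatK (t x y : ℝ) : ℝ :=
  (Real.sqrt (2 * Real.pi * t))⁻¹ * Real.exp (-(x - y) ^ 2 / (2 * t))

/-- The heat kernel with Dirichlet boundary condition at `0`:
`p^D(t,x,y) = p(t,x,y) − p(t,x,−y)`. -/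
noncomputable def pD (t x y : ℝ) : ℝ :=
  heatK t x y - heatK t x (-y)

/-! The integrand has an explicit antiderivative. Since
`d/dy erfc ((y - c)/√(2t)) = -2 p(t,c,y)` and, completing the square in the exponent,
`d/dz (γ g_{0,γ}(t,z)) = 2 g_{0,γ}(t,z) - 2 p(t,0,z)`, the function
`G(y) = γ g_{0,γ}(t,x+y) - erfc((y-x)/√(2t))/2 - erfc((y+x)/√(2t))/2`
has derivative `p^D(t,x,y) + 2 g_{0,γ}(t,x+y)`, which is nonnegative for `x, y ≥ 0`.
`G` vanishes at infinity because `γ g_{0,γ}(t,z) ≤ 2 e^{-z²/(2t)}` for `z ≥ 0`, a consequence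
of `erfc a ≤ 2 e^{-a²}` for `a ≥ 0`. Hence the integral equals `-G(0) = 1 - γ g_{0,γ}(t,x)`, by
`erfc(-u) + erfc(u) = 2`. -/

open Filter Topology

lemma integrable_exp_neg_sq : Integrable (fun z : ℝ => exp (-z ^ 2)) := by
  simpa using integrable_exp_neg_mul_sq one_pos

lemma integral_Ioi_zero_exp_neg_sq : ∫ z in Ioi (0 : ℝ), exp (-z ^ 2) = √π / 2 := by
  simpa using integral_gaussian_Ioi 1

lemma erfc_eq_one_sub (u : ℝ) : erfc u = 1 - 2 / √π * ∫ z in (0 : ℝ)..u, exp (-z ^ 2) := by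
  have hπ : √π ≠ 0 := (sqrt_pos.2 pi_pos).ne'
  rw [erfc, ← intervalIntegral.integral_Ioi_sub_Ioi' integrable_exp_neg_sq.integrableOn
    integrable_exp_neg_sq.integrableOn, integral_Ioi_zero_exp_neg_sq]
  field_simp
  linarith

lemma erfc_neg (u : ℝ) : erfc (-u) = 2 - erfc u := by
  have h : ∫ z in (0 : ℝ)..-u, exp (-z ^ 2) = -∫ z in (0 : ℝ)..u, exp (-z ^ 2) := by
    have hcomp := intervalIntegral.integral_comp_neg (a := 0) (b := u) (fun z : ℝ => exp (-z ^ 2))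
    simp only [neg_sq, neg_zero] at hcomp
    rw [hcomp]
    exact intervalIntegral.integral_symm _ _
  rw [erfc_eq_one_sub, erfc_eq_one_sub, h]
  ring

lemma hasDerivAt_erfc (u : ℝ) : HasDerivAt erfc (-(2 / √π * exp (-u ^ 2))) u := by
  have h := ((continuous_exp.comp (continuous_pow 2).neg).integral_hasStrictDerivAt 0 u).hasDerivAt
  simpa [funext erfc_eq_one_sub] using (h.const_mul (2 / √π)).const_sub 1

lemma tendsto_erfc_atTop : Tendsto erfc atTop (𝓝 0) := by
  have h := intervalIntegral_tendsto_integral_Ioi 0 integrable_exp_neg_sq.integrableOn tendsto_id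
  rw [integral_Ioi_zero_exp_neg_sq] at h
  have hπ : √π ≠ 0 := (sqrt_pos.2 pi_pos).ne'
  convert (h.const_mul (2 / √π)).const_sub 1 using 2
  · exact erfc_eq_one_sub _
  · field_simp; ring

lemma erfc_nonneg (u : ℝ) : 0 ≤ erfc u :=
  mul_nonneg (by positivity) (setIntegral_nonneg measurableSet_Ioi fun _ _ => (exp_pos _).le)

lemma erfc_le_two_mul_exp_neg_sq {a : ℝ} (ha : 0 ≤ a) : erfc a ≤ 2 * exp (-a ^ 2) := by
  have hshift : Integrable (fun z : ℝ => exp (-a ^ 2) * exp (-(z - a) ^ 2)) :=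
    (integrable_exp_neg_sq.comp_sub_right a).const_mul _
  have hpoint : ∀ z ∈ Ioi a, exp (-z ^ 2) ≤ exp (-a ^ 2) * exp (-(z - a) ^ 2) := by
    intro z hz
    rw [← exp_add, exp_le_exp]
    nlinarith [mem_Ioi.1 hz]
  have hbound : ∫ z in Ioi a, exp (-z ^ 2) ≤ exp (-a ^ 2) * √π :=
    calc ∫ z in Ioi a, exp (-z ^ 2)
        ≤ ∫ z in Ioi a, exp (-a ^ 2) * exp (-(z - a) ^ 2) :=
          setIntegral_mono_on integrable_exp_neg_sq.integrableOn hshift.integrableOn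
            measurableSet_Ioi hpoint
      _ ≤ ∫ z, exp (-a ^ 2) * exp (-(z - a) ^ 2) :=
          setIntegral_le_integral hshift (.of_forall fun _ => by positivity)
      _ = exp (-a ^ 2) * √π := by
          rw [integral_const_mul, integral_sub_right_eq_self (fun z => exp (-z ^ 2)) a]
          congr 1
          simpa using integral_gaussian 1
  have hπ : 0 < √π := sqrt_pos.2 pi_pos
  calc erfc a ≤ 2 / √π * (exp (-a ^ 2) * √π) := by unfold erfc; gcongr
    _ = 2 * exp (-a ^ 2) := by field_simp

lemma heatK_eq_exp_div {t : ℝ} (ht : 0 < t) (c y : ℝ) :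
    heatK t c y = exp (-((y - c) / √(2 * t)) ^ 2) / (√π * √(2 * t)) := by
  rw [heatK, div_pow, sq_sqrt (by positivity), show (2 * π * t) = π * (2 * t) by ring,
    sqrt_mul pi_pos.le, neg_div, ← neg_sq (c - y), neg_sub]
  ring

lemma hasDerivAt_erfc_sub_div {t : ℝ} (ht : 0 < t) (c y : ℝ) :
    HasDerivAt (fun y => erfc ((y - c) / √(2 * t))) (-2 * heatK t c y) y := by
  have h := (hasDerivAt_erfc _).comp y (((hasDerivAt_id' y).sub_const c).div_const (√(2 * t)))
  refine h.congr_deriv ?_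
  rw [heatK_eq_exp_div ht]
  field_simp

lemma pD_nonneg {t x y : ℝ} (ht : 0 ≤ t) (hx : 0 ≤ x) (hy : 0 ≤ y) : 0 ≤ pD t x y := by
  rw [pD, heatK, heatK, sub_nonneg]
  refine mul_le_mul_of_nonneg_left (exp_le_exp.2 ?_) (by positivity)
  exact div_le_div_of_nonneg_right (by nlinarith [mul_nonneg hx hy]) (by positivity)

section g0

variable {γ t : ℝ}

lemma exp_add_mul_exp_neg_sq_add (hγ : γ ≠ 0) (ht : 0 < t) (z : ℝ) :
    exp (2 * z / γ + 2 * t / γ ^ 2) * exp (-(z / √(2 * t) + √(2 * t) / γ) ^ 2) =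
      exp (-(z / √(2 * t)) ^ 2) := by
  have hs : √(2 * t) ^ 2 = 2 * t := sq_sqrt (by positivity)
  have hs0 : √(2 * t) ≠ 0 := (sqrt_pos.2 (by positivity)).ne'
  rw [← exp_add]
  congr 1
  field_simp
  linear_combination -√(2 * t) ^ 2 * hs

lemma mul_g0_eq_exp_mul_erfc (hγ : γ ≠ 0) (z : ℝ) :
    γ * g0 γ t z = exp (2 * z / γ + 2 * t / γ ^ 2) * erfc (z / √(2 * t) + √(2 * t) / γ) := by
  rw [g0]
  field_simp

lemma g0_nonneg (hγ : 0 ≤ γ) (z : ℝ) : 0 ≤ g0 γ t z := by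
  rw [g0]
  have := erfc_nonneg (z / √(2 * t) + √(2 * t) / γ)
  positivity

lemma hasDerivAt_mul_g0 (hγ : γ ≠ 0) (ht : 0 < t) (z : ℝ) :
    HasDerivAt (fun z => γ * g0 γ t z) (2 * g0 γ t z - 2 * heatK t 0 z) z := by
  have hexp : HasDerivAt (fun z => exp (2 * z / γ + 2 * t / γ ^ 2))
      (exp (2 * z / γ + 2 * t / γ ^ 2) * (2 / γ)) z := by
    refine (HasDerivAt.add_const _ ?_).exp
    simpa using ((hasDerivAt_id' z).const_mul 2).div_const γ
  have herfc := (hasDerivAt_erfc _).comp z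
    (((hasDerivAt_id' z).div_const (√(2 * t))).add_const (√(2 * t) / γ))
  refine ((hexp.mul herfc).congr_of_eventuallyEq
    (.of_forall (mul_g0_eq_exp_mul_erfc hγ))).congr_deriv ?_
  rw [Function.comp_apply, heatK_eq_exp_div ht, sub_zero, ← exp_add_mul_exp_neg_sq_add hγ ht, g0]
  field_simp
  ring

lemma tendsto_mul_g0_atTop (hγ : 0 < γ) (ht : 0 < t) :
    Tendsto (fun z => γ * g0 γ t z) atTop (𝓝 0) := by
  have hs : 0 < √(2 * t) := sqrt_pos.2 (by positivity)
  have hgauss : Tendsto (fun z => 2 * exp (-(z / √(2 * t)) ^ 2)) atTop (𝓝 0) := by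
    simpa using ((tendsto_exp_atBot.comp (tendsto_neg_atTop_atBot.comp
      ((tendsto_pow_atTop two_ne_zero).comp (tendsto_id.atTop_div_const hs)))).const_mul 2)
  refine squeeze_zero' (.of_forall fun z => mul_nonneg hγ.le (g0_nonneg hγ.le z)) ?_ hgauss
  filter_upwards [eventually_ge_atTop 0] with z hz
  rw [mul_g0_eq_exp_mul_erfc hγ.ne', ← exp_add_mul_exp_neg_sq_add hγ.ne' ht, mul_left_comm]
  gcongr
  exact erfc_le_two_mul_exp_neg_sq (by positivity)

end g0

/-- Conservativeness of sticky Brownian motion: for all `γ > 0`, `t > 0` and `x ≥ 0`,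
`∫_0^∞ [p^D(t,x,y) + 2 g_{0,γ}(t,x+y)] dy + γ g_{0,γ}(t,x) = 1`. -/
theorem sticky_kernel_total_mass_one (γ t x : ℝ) (hγ : 0 < γ) (ht : 0 < t) (hx : 0 ≤ x) :
    (∫ y in Set.Ioi (0 : ℝ), (pD t x y + 2 * g0 γ t (x + y))) + γ * g0 γ t x = 1 := by
  set G : ℝ → ℝ := fun y =>
    γ * g0 γ t (x + y) - erfc ((y - x) / √(2 * t)) / 2 - erfc ((y - -x) / √(2 * t)) / 2
  have hderiv : ∀ y ∈ Ici (0 : ℝ), HasDerivAt G (pD t x y + 2 * g0 γ t (x + y)) y := by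
    intro y _
    have hg0 := (hasDerivAt_mul_g0 hγ.ne' ht (x + y)).comp y ((hasDerivAt_id' y).const_add x)
    refine ((hg0.sub ((hasDerivAt_erfc_sub_div ht x y).div_const 2)).sub
      ((hasDerivAt_erfc_sub_div ht (-x) y).div_const 2)).congr_deriv ?_
    have hreflect : heatK t (-x) y = heatK t x (-y) := by
      simp only [heatK]; congr 3; ring
    have hshift : heatK t 0 (x + y) = heatK t x (-y) := by
      simp only [heatK]; congr 3; ring
    rw [pD, hreflect, hshift]
    ring
  have hnonneg : ∀ y ∈ Ioi (0 : ℝ), 0 ≤ pD t x y + 2 * g0 γ t (x + y) := fun y hy =>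
    add_nonneg (pD_nonneg ht.le hx hy.le) (mul_nonneg zero_le_two (g0_nonneg hγ.le _))
  have hlim : Tendsto G atTop (𝓝 0) := by
    have hs : 0 < √(2 * t) := sqrt_pos.2 (by positivity)
    have herfc (c : ℝ) : Tendsto (fun y => erfc ((y - c) / √(2 * t)) / 2) atTop (𝓝 0) := by
      simpa [sub_eq_add_neg] using (tendsto_erfc_atTop.comp
        ((tendsto_atTop_add_const_right _ (-c) tendsto_id).atTop_div_const hs)).div_const 2
    have hg0 := (tendsto_mul_g0_atTop hγ ht).comp (tendsto_atTop_add_const_left _ x tendsto_id)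
    simpa [G] using (hg0.sub (herfc x)).sub (herfc (-x))
  have hG0 : G 0 = γ * g0 γ t x - 1 := by
    simp only [G, add_zero, zero_sub, sub_neg_eq_add, zero_add, neg_div, erfc_neg]
    ring
  rw [integral_Ioi_of_hasDerivAt_of_nonneg' hderiv hnonneg hlim, hG0]
  ring
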